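/- arXiv:1710.03919 — 3 statements merged into one kernel-verified Lean document; each statement's English description precedes it below -/
import Mathlib

section
/- For every integer n ≥ 2 and every integer k with 1 ≤ k and 2k ≤ n, the vector A^{2k−1}·X₁ has entries equal to 1 in positions 2k−1 and 2k, and all other entries equal to 2. -/
/-- The `n × n` integer matrix `A` (0-indexed): row `0` has entry `1` in column `n-1`
and `0` elsewhere; for `i ≥ 1`, row `i` has entry `-1` in column `i-1`, entry `2` in
column `n-1`, and `0` elsewhere. (This is the paper's matrix with rows/columns
indexed `1,…,n`, shifted to `0,…,n-1`.) -/
def torusMatrix (n : ℕ) : Matrix (Fin n) (Fin n) ℤ :=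
  fun i j =>
    if i.val = 0 then (if j.val = n - 1 then 1 else 0)
    else (if j.val = i.val - 1 then -1 else 0) + (if j.val = n - 1 then 2 else 0)

/-- The vector `X₁ ∈ ℤⁿ` with entries `1` in positions `1` and `n`
(0-indexed: `0` and `n-1`) and `0` elsewhere. -/
def X1 (n : ℕ) : Fin n → ℤ :=
  fun j => if j.val = 0 ∨ j.val = n - 1 then 1 else 0

lemma mulVec_torus {n : ℕ} (hn : 2 ≤ n) (v : Fin n → ℤ) (j : Fin n) :
    (torusMatrix n).mulVec v j =
      if j.val = 0 then v ⟨n-1, by omega⟩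
      else -v ⟨j.val - 1, by omega⟩ + 2 * v ⟨n-1, by omega⟩ := by
  have hsum : ∀ (c : Fin n) (a : ℤ),
      ∑ i, (if (i : Fin n).val = c.val then a else 0) * v i = a * v c := by
    intro c a
    have h : ∀ i : Fin n, (if i.val = c.val then a else 0) * v i
        = if i = c then a * v c else 0 := by
      intro i; by_cases h : i = c
      · simp [h]
      · rw [if_neg (fun hh => h (Fin.ext hh)), if_neg h, zero_mul]
    rw [Finset.sum_congr rfl (fun i _ => h i), Finset.sum_ite_eq' Finset.univ c]
    simp
  simp only [Matrix.mulVec, dotProduct, torusMatrix]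
  by_cases hj : j.val = 0
  · simp only [hj, if_true]
    simpa using hsum ⟨n-1, by omega⟩ 1
  · simp only [hj, if_false, add_mul, Finset.sum_add_distrib]
    rw [hsum ⟨j.val - 1, by omega⟩ (-1), hsum ⟨n-1, by omega⟩ 2]
    ring

lemma aux1 (n : ℕ) (hn : 2 ≤ n) : ∀ k : ℕ, 1 ≤ k → 2 * k ≤ n → ∀ j : Fin n,
    ((torusMatrix n) ^ (2 * k - 1)).mulVec (X1 n) j =
      if j.val = 2 * k - 2 ∨ j.val = 2 * k - 1 then 1 else 2 := by
  intro k
  induction k with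
  | zero => omega
  | succ k ih =>
    intro _ hkn j
    have hj := j.isLt
    by_cases hk1 : k = 0
    · subst hk1
      rw [show 2 * 1 - 1 = 1 from rfl, pow_one]
      simp only [mulVec_torus hn, X1, Fin.val_mk, or_true, ite_true]
      split_ifs <;> omega
    · have hk' : 1 ≤ k := by omega
      have hkn' : 2 * k ≤ n := by omega
      have IH := ih hk' hkn'
      have hpow : 2 * (k + 1) - 1 = 1 + (1 + (2 * k - 1)) := by omega
      rw [hpow, pow_add, pow_one, pow_add, pow_one, ← Matrix.mulVec_mulVec,
        ← Matrix.mulVec_mulVec]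
      simp only [mulVec_torus hn, IH, Fin.val_mk, or_true, ite_true]
      split_ifs <;> omega

/-- For every integer `n ≥ 2` and every integer `k` with `1 ≤ k` and `2k ≤ n`,
the vector `A^(2k-1)·X₁` has entries equal to `1` in (1-indexed) positions `2k-1`
and `2k` (0-indexed: `2k-2` and `2k-1`), and all other entries equal to `2`. -/
theorem statement1 (n k : ℕ) (hn : 2 ≤ n) (hk : 1 ≤ k) (hkn : 2 * k ≤ n) (j : Fin n) :
    ((torusMatrix n) ^ (2 * k - 1)).mulVec (X1 n) j =
      if j.val = 2 * k - 2 ∨ j.val = 2 * k - 1 then 1 else 2 :=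
  aux1 n hn k hk hkn j
end

section
/- For every even integer n ≥ 2, every integer k ≥ 0, and every position j with 1 ≤ j ≤ n, the j-th entry of the vector A^k·X₁ lies in the set {0, 1, 2, 3}. -/
def V (n m : ℕ) : Fin n → ℤ :=
  fun j =>
    if m = 0 then (if j.val = 0 ∨ j.val = n - 1 then 1 else 0)
    else if j.val = m - 1 ∨ j.val = m then (if m % 2 = 0 then 3 else 1) else 2

lemma mulVec_eq (n : ℕ) (hn : 2 ≤ n) (v : Fin n → ℤ) (j : Fin n) :
    (torusMatrix n).mulVec v j =
      if j.val = 0 then v ⟨n - 1, by omega⟩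
      else 2 * v ⟨n - 1, by omega⟩ - v ⟨j.val - 1, by omega⟩ := by
  unfold Matrix.mulVec dotProduct torusMatrix
  split_ifs with h
  · simp only [h, if_true]
    rw [Finset.sum_eq_single (⟨n - 1, by omega⟩ : Fin n)]
    · simp
    · intro i _ hi
      rw [if_neg, zero_mul]
      intro hc
      exact hi (Fin.ext hc)
    · simp
  · simp only [h, if_false]
    have : ∀ i : Fin n, ((if i.val = j.val - 1 then (-1 : ℤ) else 0) + (if i.val = n - 1 then 2 else 0)) * v i
        = (if i = ⟨j.val - 1, by omega⟩ then -v i else 0) + (if i = ⟨n - 1, by omega⟩ then 2 * v i else 0) := by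
      intro i
      simp only [Fin.ext_iff]
      split_ifs <;> ring
    rw [Finset.sum_congr rfl (fun i _ => this i), Finset.sum_add_distrib,
      Finset.sum_ite_eq' Finset.univ, Finset.sum_ite_eq' Finset.univ]
    simp
    ring

lemma step_lemma (n : ℕ) (hn : 2 ≤ n) (hne : n % 2 = 0) (m : ℕ) (hm : m < n) :
    (torusMatrix n).mulVec (V n m) = V n ((m + 1) % n) := by
  funext j
  rw [mulVec_eq n hn]
  have hj := j.isLt
  by_cases hmn : m + 1 = n
  · rw [hmn, Nat.mod_self]
    simp only [V]
    split_ifs <;> first | omega | tauto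
  · rw [Nat.mod_eq_of_lt (by omega)]
    simp only [V]
    split_ifs <;> first | omega | tauto

lemma pow_eq (n : ℕ) (hn : 2 ≤ n) (hne : n % 2 = 0) (k : ℕ) :
    ((torusMatrix n) ^ k).mulVec (X1 n) = V n (k % n) := by
  induction k with
  | zero =>
    simp only [pow_zero, Matrix.one_mulVec, Nat.zero_mod]
    funext j
    simp [X1, V]
  | succ k ih =>
    rw [pow_succ', ← Matrix.mulVec_mulVec, ih, step_lemma n hn hne _ (Nat.mod_lt _ (by omega))]
    conv_rhs => rw [Nat.add_mod]
    rw [Nat.one_mod_eq_one.mpr (by omega)]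

/-- For every even integer `n ≥ 2`, every integer `k ≥ 0`, and every position
`j`, the `j`-th entry of the vector `A^k·X₁` lies in `{0, 1, 2, 3}`. -/
theorem statement7 (n : ℕ) (hn : 2 ≤ n) (hne : Even n) (k : ℕ) (j : Fin n) :
    ((torusMatrix n) ^ k).mulVec (X1 n) j ∈ ({0, 1, 2, 3} : Set ℤ) := by
  rw [pow_eq n hn (Nat.even_iff.mp hne)]
  simp only [V, Set.mem_insert_iff, Set.mem_singleton_iff]
  split_ifs <;> norm_num
end

section
/- For every even integer n ≥ 4, the set of all entries of the vectors A^k·X₁ for k = 0, 1, …, n−1 is exactly {0, 1, 2, 3}; that is, { (A^k·X₁)_j : 0 ≤ k ≤ n−1, 1 ≤ j ≤ n } = {0, 1, 2, 3}. -/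
/-- Closed form for the vectors `A^k · X₁`. -/
def Wvec (n k : ℕ) : Fin n → ℤ := fun j =>
  if k = 0 then (if j.val = 0 ∨ j.val = n - 1 then 1 else 0)
  else if j.val = k - 1 ∨ j.val = k then (if k % 2 = 0 then 3 else 1) else 2

lemma torus_mulVec (n : ℕ) (hn : 1 ≤ n) (v : Fin n → ℤ) (i : Fin n) :
    (torusMatrix n).mulVec v i =
      if i.val = 0 then v ⟨n - 1, by omega⟩
      else -v ⟨i.val - 1, by omega⟩ + 2 * v ⟨n - 1, by omega⟩ := by
  have e1 : ∀ j : Fin n, (j.val = n - 1) = (j = ⟨n - 1, by omega⟩) := fun j => by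
    simp [Fin.ext_iff]
  have e2 : ∀ j : Fin n, (j.val = i.val - 1) = (j = ⟨i.val - 1, by omega⟩) := fun j => by
    simp [Fin.ext_iff]
  show (∑ j : Fin n, torusMatrix n i j * v j) = _
  by_cases hi : i.val = 0 <;>
    simp [torusMatrix, hi, e1, e2, add_mul, ite_mul, Finset.sum_add_distrib,
      Finset.sum_ite_eq']

lemma torus_step (n : ℕ) (hn : 4 ≤ n) (k : ℕ) (hk : k ≤ n - 2) :
    (torusMatrix n).mulVec (Wvec n k) = Wvec n (k + 1) := by
  funext i
  rw [torus_mulVec n (by omega)]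
  have hi := i.isLt
  have h2 := Nat.mod_two_eq_zero_or_one k
  simp only [Wvec, Fin.val_mk]
  split_ifs <;> first | omega | simp_all

lemma torus_pow (n : ℕ) (hn : 4 ≤ n) :
    ∀ k, k ≤ n - 1 → ((torusMatrix n) ^ k).mulVec (X1 n) = Wvec n k := by
  intro k
  induction k with
  | zero =>
    intro _
    rw [pow_zero, Matrix.one_mulVec]
    funext j
    simp [X1, Wvec]
  | succ k ih =>
    intro h
    rw [pow_succ', ← Matrix.mulVec_mulVec, ih (by omega),
      torus_step n hn k (by omega)]

/-- For every even integer `n ≥ 4`, the set of all entries of the vectors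
`A^k·X₁` for `k = 0, 1, …, n-1` is exactly `{0, 1, 2, 3}`. -/
theorem statement8 (n : ℕ) (hn : 4 ≤ n) (hne : Even n) :
    {x : ℤ | ∃ k : ℕ, k ≤ n - 1 ∧ ∃ j : Fin n,
        ((torusMatrix n) ^ k).mulVec (X1 n) j = x} =
      ({0, 1, 2, 3} : Set ℤ) := by
  ext x
  simp only [Set.mem_setOf_eq, Set.mem_insert_iff, Set.mem_singleton_iff]
  constructor
  · rintro ⟨k, hk, j, rfl⟩
    rw [torus_pow n hn k hk]
    have hj := j.isLt
    simp only [Wvec]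
    split_ifs <;> simp
  · rintro (rfl | rfl | rfl | rfl)
    · exact ⟨0, by omega, ⟨1, by omega⟩, by
        rw [torus_pow n hn 0 (by omega)]; simp [Wvec]; omega⟩
    · exact ⟨0, by omega, ⟨0, by omega⟩, by
        rw [torus_pow n hn 0 (by omega)]; simp [Wvec]⟩
    · exact ⟨1, by omega, ⟨2, by omega⟩, by
        rw [torus_pow n hn 1 (by omega)]; simp [Wvec]⟩
    · exact ⟨2, by omega, ⟨1, by omega⟩, by
        rw [torus_pow n hn 2 (by omega)]; simp [Wvec]⟩
end
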